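/- Let t₁ < t₂ be real numbers and let p₂, q₂ : [t₁,t₂] → ℝ be continuous with p₂(t) > 0 for all t ∈ [t₁,t₂]. Define J(u) = ∫_{t₁}^{t₂} [p₂(t)(u'(t))² − q₂(t)(u(t))²] dt. Suppose there exists a function u ∈ C¹[t₁,t₂] with u(t₁) = 0 = u(t₂), u not identically zero, such that J(u) ≤ 0. Then every real solution v of (p₂(t)v'(t))' + q₂(t)v(t) = 0 on [t₁,t₂], except constant multiples of u, vanishes at some point of the open interval (t₁,t₂). -/

import Mathlib

/-- `v` is a solution of `(p(t) v'(t))' + q(t) v(t) = 0` on `[t₁, t₂]`: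
`v` is continuously differentiable on `[t₁,t₂]`, `t ↦ p(t) v'(t)` is continuously
differentiable on `[t₁,t₂]`, and the equation holds for all `t ∈ [t₁,t₂]`. -/
def IsODESolution (t₁ t₂ : ℝ) (p q v : ℝ → ℝ) : Prop :=
  ContDiffOn ℝ 1 v (Set.Icc t₁ t₂) ∧
  ContDiffOn ℝ 1 (fun t => p t * derivWithin v (Set.Icc t₁ t₂) t) (Set.Icc t₁ t₂) ∧
  ∀ t ∈ Set.Icc t₁ t₂,
    derivWithin (fun τ => p τ * derivWithin v (Set.Icc t₁ t₂) τ) (Set.Icc t₁ t₂) t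
      + q t * v t = 0

/-- The quadratic functional `J(u) = ∫_{t₁}^{t₂} [p₂ (u')² − q₂ u²] dt`. -/
noncomputable def quadFunctional (t₁ t₂ : ℝ) (p₂ q₂ u : ℝ → ℝ) : ℝ :=
  ∫ t in t₁..t₂,
    (p₂ t * (derivWithin u (Set.Icc t₁ t₂) t) ^ 2 - q₂ t * (u t) ^ 2)

/-!
Suppose `v` has no zero in `(t₁, t₂)`. There Picone's identity
`(p v' u² / v)' = p u'² - q u² - p (u' - v' u / v)²` holds, so
`Φ(x) = ∫_{t₁}^x (p u'² - q u²) - p v' u² / v` is nondecreasing on `(t₁, t₂)`.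
The boundary term tends to `0` at both ends: `u` vanishes there, and `u / v` stays bounded,
because at an endpoint where `v = 0` uniqueness for the ODE forces `v' ≠ 0`.
Hence `0 ≤ Φ ≤ J(u) ≤ 0` on `(t₁, t₂)`, so `Φ` is constant, the Wronskian `u' v - u v'`
vanishes, and `u` is a constant multiple of `v`.
-/

open Set Filter Topology

theorem lipschitzWith_mul_snd_mul_fst (a b : ℝ) :
    LipschitzWith ‖(a, b)‖₊ fun x : ℝ × ℝ => (a * x.2, b * x.1) :=
  ((lipschitzWith_smul a).comp LipschitzWith.prod_snd).prodMk
    ((lipschitzWith_smul b).comp LipschitzWith.prod_fst) |>.weaken (by simp [Prod.nnnorm_def])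

theorem DifferentiableOn.hasDerivAt_derivWithin_Icc {f : ℝ → ℝ} {a b x : ℝ}
    (hf : DifferentiableOn ℝ f (Icc a b)) (hx : x ∈ Ioo a b) :
    HasDerivAt f (derivWithin f (Icc a b) x) x :=
  (hf x (Ioo_subset_Icc_self hx)).hasDerivWithinAt.hasDerivAt (Icc_mem_nhds hx.1 hx.2)

theorem HasDerivAt.picone {u v w : ℝ → ℝ} {u' v' p q t : ℝ} (hu : HasDerivAt u u' t)
    (hv : HasDerivAt v v' t) (hw : HasDerivAt w (-(q * v t)) t) (hwt : w t = p * v')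
    (hvt : v t ≠ 0) :
    HasDerivAt (fun s => w s * u s ^ 2 / v s)
      (p * u' ^ 2 - q * u t ^ 2 - p * (u' - v' / v t * u t) ^ 2) t := by
  refine ((hw.fun_mul (hu.fun_pow 2)).fun_div hv hvt).congr_deriv ?_
  rw [hwt]
  field_simp
  ring

theorem tendsto_div_of_hasDerivWithinAt {u v : ℝ → ℝ} {u' v' x : ℝ} {s : Set ℝ}
    (hu : HasDerivWithinAt u u' s x) (hv : HasDerivWithinAt v v' s x) (hux : u x = 0)
    (hvx : v x = 0) (hv' : v' ≠ 0) :
    Tendsto (fun t => u t / v t) (𝓝[s \ {x}] x) (𝓝 (u' / v')) := by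
  rw [hasDerivWithinAt_iff_tendsto_slope] at hu hv
  refine (hu.div hv hv').congr' ?_
  filter_upwards [self_mem_nhdsWithin] with t ht
  simp only [Pi.div_apply]
  rw [slope_def_field, slope_def_field, hux, hvx, sub_zero, sub_zero,
    div_div_div_cancel_right₀ (sub_ne_zero.2 ht.2)]

theorem tendsto_mul_sq_div_of_hasDerivWithinAt {u v w : ℝ → ℝ} {u' v' x : ℝ} {s : Set ℝ}
    (hu : HasDerivWithinAt u u' s x) (hv : HasDerivWithinAt v v' s x)
    (hw : ContinuousWithinAt w s x) (hux : u x = 0) (hv₀ : v x ≠ 0 ∨ v' ≠ 0) :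
    Tendsto (fun t => w t * u t ^ 2 / v t) (𝓝[s \ {x}] x) (𝓝 0) := by
  obtain ⟨L, hL⟩ : ∃ L, Tendsto (fun t => u t / v t) (𝓝[s \ {x}] x) (𝓝 L) := by
    by_cases hvx : v x = 0
    · exact ⟨_, tendsto_div_of_hasDerivWithinAt hu hv hux hvx (hv₀.resolve_left (not_not.2 hvx))⟩
    · exact ⟨_, (hu.continuousWithinAt.div hv.continuousWithinAt hvx).mono sdiff_subset⟩
  have hwu : Tendsto (fun t => w t * u t) (𝓝[s \ {x}] x) (𝓝 0) := by
    simpa [hux] using ((hw.fun_mul hu.continuousWithinAt).mono sdiff_subset).tendsto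
  simpa using (hwu.mul hL).congr fun t => by ring

theorem MonotoneOn.mem_Icc_of_tendsto {α : Type*} [Preorder α] [TopologicalSpace α]
    [OrderClosedTopology α] {f : ℝ → α} {a b : ℝ} {la lb : α} (hf : MonotoneOn f (Ioo a b))
    (ha : Tendsto f (𝓝[>] a) (𝓝 la)) (hb : Tendsto f (𝓝[<] b) (𝓝 lb)) {x : ℝ}
    (hx : x ∈ Ioo a b) : f x ∈ Icc la lb :=
  ⟨le_of_tendsto ha <| mem_of_superset (Ioc_mem_nhdsGT hx.1) fun _ hy =>
      hf ⟨hy.1, hy.2.trans_lt hx.2⟩ hx hy.2,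
    ge_of_tendsto hb <| mem_of_superset (Ico_mem_nhdsLT hx.2) fun _ hy =>
      hf hx ⟨hx.1.trans_le hy.1, hy.2⟩ hy.1⟩

theorem exists_eqOn_const_mul_of_wronskian_eq_zero {u v u' v' : ℝ → ℝ} {a b : ℝ} (hab : a < b)
    (hu : ContinuousOn u (Icc a b)) (hv : ContinuousOn v (Icc a b))
    (hu' : ∀ x ∈ Ioo a b, HasDerivAt u (u' x) x) (hv' : ∀ x ∈ Ioo a b, HasDerivAt v (v' x) x)
    (hv₀ : ∀ x ∈ Ioo a b, v x ≠ 0) (hW : ∀ x ∈ Ioo a b, u' x * v x = u x * v' x) :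
    ∃ c, EqOn u (fun x => c * v x) (Icc a b) := by
  have hdiv : ∀ x ∈ Ioo a b, HasDerivAt (fun x => u x / v x) 0 x := fun x hx =>
    ((hu' x hx).fun_div (hv' x hx) (hv₀ x hx)).congr_deriv (by rw [hW x hx, sub_self, zero_div])
  obtain ⟨c, hc⟩ := isOpen_Ioo.exists_is_const_of_deriv_eq_zero isPreconnected_Ioo
    (fun x hx => (hdiv x hx).differentiableAt.differentiableWithinAt)
    (fun x hx => (hdiv x hx).deriv)
  exact ⟨c, EqOn.of_subset_closure (fun x hx => (div_eq_iff (hv₀ x hx)).1 (hc x hx)) hu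
    (continuousOn_const.mul hv) Ioo_subset_Icc_self (closure_Ioo hab.ne).ge⟩

namespace IsODESolution

variable {t₁ t₂ : ℝ} {p q v : ℝ → ℝ}

theorem hasDerivWithinAt_mul_derivWithin (hv : IsODESolution t₁ t₂ p q v) {t : ℝ}
    (ht : t ∈ Icc t₁ t₂) :
    HasDerivWithinAt (fun s => p s * derivWithin v (Icc t₁ t₂) s) (-(q t * v t)) (Icc t₁ t₂) t :=
  ((hv.2.1.differentiableOn one_ne_zero) t ht).hasDerivWithinAt.congr_deriv
    (by linarith [hv.2.2 t ht])

theorem eqOn_zero_of_endpoint (hv : IsODESolution t₁ t₂ p q v)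
    (hp : ContinuousOn p (Icc t₁ t₂)) (hq : ContinuousOn q (Icc t₁ t₂))
    (hp_pos : ∀ t ∈ Icc t₁ t₂, 0 < p t) {t₀ : ℝ} (ht₀ : t₀ = t₁ ∨ t₀ = t₂) (hv₀ : v t₀ = 0)
    (hv₀' : derivWithin v (Icc t₁ t₂) t₀ = 0) : EqOn v 0 (Icc t₁ t₂) := by
  set f := fun s => (v s, p s * derivWithin v (Icc t₁ t₂) s)
  set F : ℝ → ℝ × ℝ → ℝ × ℝ := fun t x => ((p t)⁻¹ * x.2, -q t * x.1)
  have hp₀ : ∀ t ∈ Icc t₁ t₂, p t ≠ 0 := fun t ht => (hp_pos t ht).ne'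
  have hf : ∀ t ∈ Icc t₁ t₂, HasDerivWithinAt f (F t (f t)) (Icc t₁ t₂) t := fun t ht =>
    (((hv.1.differentiableOn one_ne_zero) t ht).hasDerivWithinAt.prodMk
      (hv.hasDerivWithinAt_mul_derivWithin ht)).congr_deriv
      (by simp [F, f, inv_mul_cancel_left₀ (hp₀ t ht)])
  have hfc : ContinuousOn f (Icc t₁ t₂) := fun t ht => (hf t ht).continuousWithinAt
  have h0 : ∀ t, HasDerivWithinAt (fun _ => 0) (F t 0) (Icc t₁ t₂) t := fun t => by
    rw [show F t 0 = 0 by simp [F]]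
    exact hasDerivWithinAt_const t _ _
  obtain ⟨C, hC⟩ := isCompact_Icc.exists_bound_of_continuousOn
    ((hp.inv₀ hp₀).prodMk hq.neg)
  have hF : ∀ t ∈ Icc t₁ t₂, LipschitzOnWith C.toNNReal (F t) univ := fun t ht =>
    (lipschitzWith_mul_snd_mul_fst _ _).weaken
      (norm_toNNReal.symm.trans_le (Real.toNNReal_le_toNNReal (hC t ht)))
      |>.lipschitzOnWith
  suffices EqOn f (fun _ => 0) (Icc t₁ t₂) from fun t ht => congrArg Prod.fst (this ht)
  rcases ht₀ with rfl | rfl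
  · exact ODE_solution_unique_of_mem_Icc_right (fun t ht => hF t (Ico_subset_Icc_self ht)) hfc
      (fun t ht => (hf t (Ico_subset_Icc_self ht)).mono_of_mem_nhdsWithin
        (Icc_mem_nhdsGE_of_mem ht)) (fun _ _ => mem_univ _) continuousOn_const
      (fun t ht => (h0 t).mono_of_mem_nhdsWithin (Icc_mem_nhdsGE_of_mem ht))
      (fun _ _ => mem_univ _) (by simp [f, hv₀, hv₀'])
  · exact ODE_solution_unique_of_mem_Icc_left (fun t ht => hF t (Ioc_subset_Icc_self ht)) hfc
      (fun t ht => (hf t (Ioc_subset_Icc_self ht)).mono_of_mem_nhdsWithin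
        (Icc_mem_nhdsLE_of_mem ht)) (fun _ _ => mem_univ _) continuousOn_const
      (fun t ht => (h0 t).mono_of_mem_nhdsWithin (Icc_mem_nhdsLE_of_mem ht))
      (fun _ _ => mem_univ _) (by simp [f, hv₀, hv₀'])

theorem tendsto_mul_sq_div_endpoint (hv : IsODESolution t₁ t₂ p q v)
    (hp : ContinuousOn p (Icc t₁ t₂)) (hq : ContinuousOn q (Icc t₁ t₂))
    (hp_pos : ∀ t ∈ Icc t₁ t₂, 0 < p t) (hv_ne : ∃ t ∈ Icc t₁ t₂, v t ≠ 0) {u : ℝ → ℝ}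
    (hu : DifferentiableOn ℝ u (Icc t₁ t₂)) {x : ℝ} (hx : x = t₁ ∨ x = t₂) (hux : u x = 0) :
    Tendsto (fun t => p t * derivWithin v (Icc t₁ t₂) t * u t ^ 2 / v t)
      (𝓝[Icc t₁ t₂ \ {x}] x) (𝓝 0) := by
  obtain ⟨s, hs, hvs⟩ := hv_ne
  have hxI : x ∈ Icc t₁ t₂ := by
    rcases hx with rfl | rfl
    exacts [left_mem_Icc.2 (hs.1.trans hs.2), right_mem_Icc.2 (hs.1.trans hs.2)]
  refine tendsto_mul_sq_div_of_hasDerivWithinAt (hu x hxI).hasDerivWithinAt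
    ((hv.1.differentiableOn one_ne_zero) x hxI).hasDerivWithinAt
    (hv.2.1.continuousOn x hxI) hux ?_
  by_contra! h
  exact hvs (hv.eqOn_zero_of_endpoint hp hq hp_pos hx h.1 h.2 hs)

end IsODESolution

section Picone

variable {t₁ t₂ : ℝ} {p q u v : ℝ → ℝ}

theorem continuousOn_quadIntegrand (ht : t₁ < t₂) (hp : ContinuousOn p (Icc t₁ t₂))
    (hq : ContinuousOn q (Icc t₁ t₂)) (hu : ContDiffOn ℝ 1 u (Icc t₁ t₂)) :
    ContinuousOn (fun t => p t * derivWithin u (Icc t₁ t₂) t ^ 2 - q t * u t ^ 2) (Icc t₁ t₂) :=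
  (hp.mul ((hu.continuousOn_derivWithin (uniqueDiffOn_Icc ht) le_rfl).pow 2)).sub
    (hq.mul (hu.continuousOn.pow 2))

noncomputable def piconeFunction (t₁ t₂ : ℝ) (p q u v : ℝ → ℝ) (x : ℝ) : ℝ :=
  (∫ t in t₁..x, (p t * (derivWithin u (Icc t₁ t₂) t) ^ 2 - q t * (u t) ^ 2)) -
    p x * derivWithin v (Icc t₁ t₂) x * u x ^ 2 / v x

theorem hasDerivAt_piconeFunction (ht : t₁ < t₂) (hv : IsODESolution t₁ t₂ p q v)
    (hp : ContinuousOn p (Icc t₁ t₂)) (hq : ContinuousOn q (Icc t₁ t₂))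
    (hu : ContDiffOn ℝ 1 u (Icc t₁ t₂)) {x : ℝ} (hx : x ∈ Ioo t₁ t₂) (hvx : v x ≠ 0) :
    HasDerivAt (piconeFunction t₁ t₂ p q u v)
      (p x * (derivWithin u (Icc t₁ t₂) x - derivWithin v (Icc t₁ t₂) x / v x * u x) ^ 2) x := by
  have hφ := continuousOn_quadIntegrand ht hp hq hu
  have hF := intervalIntegral.integral_hasDerivAt_right
    (hφ.mono (uIcc_subset_Icc (left_mem_Icc.2 ht.le) (Ioo_subset_Icc_self hx))).intervalIntegrable
    (hφ.mono Ioo_subset_Icc_self |>.stronglyMeasurableAtFilter isOpen_Ioo x hx)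
    (hφ.continuousAt (Icc_mem_nhds hx.1 hx.2))
  have hw := (hv.hasDerivWithinAt_mul_derivWithin (Ioo_subset_Icc_self hx)).hasDerivAt
    (Icc_mem_nhds hx.1 hx.2)
  exact (hF.sub (((hu.differentiableOn one_ne_zero).hasDerivAt_derivWithin_Icc hx).picone
    ((hv.1.differentiableOn one_ne_zero).hasDerivAt_derivWithin_Icc hx) hw rfl hvx)).congr_deriv
    (by ring)

theorem tendsto_piconeFunction_endpoint (ht : t₁ < t₂) (hv : IsODESolution t₁ t₂ p q v)
    (hp : ContinuousOn p (Icc t₁ t₂)) (hq : ContinuousOn q (Icc t₁ t₂))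
    (hp_pos : ∀ t ∈ Icc t₁ t₂, 0 < p t) (hv_ne : ∃ t ∈ Icc t₁ t₂, v t ≠ 0)
    (hu : ContDiffOn ℝ 1 u (Icc t₁ t₂)) {x : ℝ} (hx : x = t₁ ∨ x = t₂) (hux : u x = 0) :
    Tendsto (piconeFunction t₁ t₂ p q u v) (𝓝[Icc t₁ t₂ \ {x}] x)
      (𝓝 (∫ t in t₁..x, (p t * (derivWithin u (Icc t₁ t₂) t) ^ 2 - q t * (u t) ^ 2))) := by
  have hF := intervalIntegral.continuousOn_primitive_interval (μ := MeasureTheory.volume)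
    (by rw [uIcc_of_le ht.le]; exact (continuousOn_quadIntegrand ht hp hq hu).integrableOn_Icc)
  rw [uIcc_of_le ht.le] at hF
  have hxI : x ∈ Icc t₁ t₂ := by
    rcases hx with rfl | rfl
    exacts [left_mem_Icc.2 ht.le, right_mem_Icc.2 ht.le]
  unfold piconeFunction
  simpa only [sub_zero] using ((hF x hxI).mono sdiff_subset).tendsto.sub
    (hv.tendsto_mul_sq_div_endpoint hp hq hp_pos hv_ne (hu.differentiableOn one_ne_zero) hx hux)

theorem IsODESolution.wronskian_eq_zero_of_quadFunctional_nonpos (ht : t₁ < t₂)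
    (hv : IsODESolution t₁ t₂ p q v) (hp : ContinuousOn p (Icc t₁ t₂))
    (hq : ContinuousOn q (Icc t₁ t₂)) (hp_pos : ∀ t ∈ Icc t₁ t₂, 0 < p t)
    (hu : ContDiffOn ℝ 1 u (Icc t₁ t₂)) (hu₁ : u t₁ = 0) (hu₂ : u t₂ = 0)
    (hJ : quadFunctional t₁ t₂ p q u ≤ 0) (hv₀ : ∀ t ∈ Ioo t₁ t₂, v t ≠ 0) {x : ℝ}
    (hx : x ∈ Ioo t₁ t₂) :
    derivWithin u (Icc t₁ t₂) x * v x = u x * derivWithin v (Icc t₁ t₂) x := by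
  set Φ := piconeFunction t₁ t₂ p q u v
  have hΦ' := fun y (hy : y ∈ Ioo t₁ t₂) => hasDerivAt_piconeFunction ht hv hp hq hu hy (hv₀ y hy)
  have hΦ_mono : MonotoneOn Φ (Ioo t₁ t₂) :=
    monotoneOn_of_hasDerivWithinAt_nonneg (convex_Ioo t₁ t₂)
      (fun y hy => (hΦ' y hy).continuousAt.continuousWithinAt)
      (fun y hy => (hΦ' y (interior_Ioo.subset hy)).hasDerivWithinAt)
      (fun y hy => mul_nonneg (hp_pos y (Ioo_subset_Icc_self (interior_Ioo.subset hy))).le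
        (sq_nonneg _))
  have hv_ne : ∃ t ∈ Icc t₁ t₂, v t ≠ 0 := ⟨x, Ioo_subset_Icc_self hx, hv₀ x hx⟩
  have hΦ_left : Tendsto Φ (𝓝[>] t₁) (𝓝 0) := by
    simpa [Icc_sdiff_left, nhdsWithin_Ioc_eq_nhdsGT ht] using
      tendsto_piconeFunction_endpoint ht hv hp hq hp_pos hv_ne hu (Or.inl rfl) hu₁
  have hΦ_right : Tendsto Φ (𝓝[<] t₂) (𝓝 (quadFunctional t₁ t₂ p q u)) := by
    simpa [Icc_sdiff_right, nhdsWithin_Ico_eq_nhdsLT ht, quadFunctional] using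
      tendsto_piconeFunction_endpoint ht hv hp hq hp_pos hv_ne hu (Or.inr rfl) hu₂
  have hΦ_zero : EqOn Φ 0 (Ioo t₁ t₂) := fun y hy =>
    have h := hΦ_mono.mem_Icc_of_tendsto hΦ_left hΦ_right hy
    le_antisymm (h.2.trans hJ) h.1
  have hψ := (hΦ' x hx).unique ((hasDerivAt_const x (0 : ℝ)).congr_of_eventuallyEq
    (hΦ_zero.eventuallyEq_of_mem (isOpen_Ioo.mem_nhds hx)))
  rw [mul_eq_zero, or_iff_right (hp_pos x (Ioo_subset_Icc_self hx)).ne', sq_eq_zero_iff,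
    sub_eq_zero] at hψ
  rw [hψ]
  field_simp [hv₀ x hx]

end Picone

/-- **Leighton's variational lemma.** -/
theorem leighton_variational_lemma
    (t₁ t₂ : ℝ) (ht : t₁ < t₂) (p₂ q₂ : ℝ → ℝ)
    (hp₂ : ContinuousOn p₂ (Set.Icc t₁ t₂))
    (hq₂ : ContinuousOn q₂ (Set.Icc t₁ t₂))
    (hp₂pos : ∀ t ∈ Set.Icc t₁ t₂, 0 < p₂ t)
    (u : ℝ → ℝ) (hu : ContDiffOn ℝ 1 u (Set.Icc t₁ t₂))
    (hu₁ : u t₁ = 0) (hu₂ : u t₂ = 0)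
    (hunt : ∃ t ∈ Set.Icc t₁ t₂, u t ≠ 0)
    (hJ : quadFunctional t₁ t₂ p₂ q₂ u ≤ 0)
    (v : ℝ → ℝ) (hv : IsODESolution t₁ t₂ p₂ q₂ v)
    (hvu : ¬ ∃ c : ℝ, ∀ t ∈ Set.Icc t₁ t₂, v t = c * u t) :
    ∃ t ∈ Set.Ioo t₁ t₂, v t = 0 := by
  by_contra! hv₀
  obtain ⟨c, hc⟩ := exists_eqOn_const_mul_of_wronskian_eq_zero ht hu.continuousOn
    hv.1.continuousOn
    (fun x hx => (hu.differentiableOn one_ne_zero).hasDerivAt_derivWithin_Icc hx)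
    (fun x hx => (hv.1.differentiableOn one_ne_zero).hasDerivAt_derivWithin_Icc hx) hv₀
    (fun x => hv.wronskian_eq_zero_of_quadFunctional_nonpos ht hp₂ hq₂ hp₂pos hu hu₁ hu₂ hJ hv₀)
  have hc₀ : c ≠ 0 := by
    rintro rfl
    obtain ⟨t, ht, hut⟩ := hunt
    exact hut (by simpa using hc ht)
  exact hvu ⟨c⁻¹, fun t ht => by rw [hc ht, inv_mul_cancel_left₀ hc₀]⟩
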